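/- Let ε = (ε_ij) be a smooth symmetric second-order tensor field on ℝ³. For each fixed point x₁ ∈ ℝ³ and each i ∈ {1,2,3}, define the one-form α^i on ℝ³ with components α^i_k(x) = ε_ik(x) + Σ_j (x₁^j − x^j)(∂_j ε_ik(x) − ∂_i ε_jk(x)). Then the exterior derivatives dα^i vanish identically (i.e., ∂_k α^i_l − ∂_l α^i_k = 0 for all k, l, all x ∈ ℝ³, all i, and all choices of x₁ ∈ ℝ³) if and only if the Saint-Venant tensor of ε vanishes identically, i.e., ∂_l∂_k ε_ij − ∂_l∂_i ε_jk + ∂_i∂_j ε_kl − ∂_k∂_j ε_il = 0 for all i, j, k, l on ℝ³. -/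

import Mathlib

/-- The partial derivative `∂_i f` of a scalar field on `ℝ³`. -/
noncomputable def pd (i : Fin 3) (f : (Fin 3 → ℝ) → ℝ) : (Fin 3 → ℝ) → ℝ :=
  fun x => fderiv ℝ f x (Pi.single i 1)

/-- The Saint-Venant tensor
`W_ijkl = ∂_l∂_k ε_ij − ∂_l∂_i ε_jk + ∂_i∂_j ε_kl − ∂_k∂_j ε_il`. -/
noncomputable def SV (ε : Fin 3 → Fin 3 → (Fin 3 → ℝ) → ℝ) (i j k l : Fin 3) :
    (Fin 3 → ℝ) → ℝ :=
  fun x => pd l (pd k (ε i j)) x - pd l (pd i (ε j k)) x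
    + pd i (pd j (ε k l)) x - pd k (pd j (ε i l)) x

/-- The component `α^i_k` (for base point `x₁`) of the Cesàro–Volterra one-form
`α^i_k(x) = ε_ik(x) + Σ_j (x₁^j − x^j)(∂_j ε_ik(x) − ∂_i ε_jk(x))`. -/
noncomputable def cvForm (ε : Fin 3 → Fin 3 → (Fin 3 → ℝ) → ℝ)
    (x₁ : Fin 3 → ℝ) (i k : Fin 3) : (Fin 3 → ℝ) → ℝ :=
  fun x => ε i k x + ∑ j, (x₁ j - x j) * (pd j (ε i k) x - pd i (ε j k) x)

lemma contDiff_pd {f : (Fin 3 → ℝ) → ℝ} (hf : ContDiff ℝ (⊤ : ℕ∞) f) (i : Fin 3) :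
    ContDiff ℝ (⊤ : ℕ∞) (pd i f) := by
  unfold pd
  exact (hf.fderiv_right (by simp)).clm_apply contDiff_const

lemma pd_comm {f : (Fin 3 → ℝ) → ℝ} (hf : ContDiff ℝ (⊤ : ℕ∞) f) (k l : Fin 3) (x : Fin 3 → ℝ) :
    pd k (pd l f) x = pd l (pd k f) x := by
  have hsymm : IsSymmSndFDerivAt ℝ f x :=
    (hf.contDiffAt).isSymmSndFDerivAt (by rw [minSmoothness_of_isRCLikeNormedField]; exact WithTop.coe_le_coe.mpr (le_top : (2 : ℕ∞) ≤ ⊤))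
  have hdf : ContDiff ℝ (⊤ : ℕ∞) (fderiv ℝ f) := hf.fderiv_right (by simp)
  have h : ∀ m n : Fin 3, pd m (pd n f) x
      = fderiv ℝ (fderiv ℝ f) x (Pi.single m 1) (Pi.single n 1) := by
    intro m n
    unfold pd
    rw [fderiv_clm_apply (hdf.differentiable (by simp)).differentiableAt
      (differentiableAt_const _)]
    simp
  rw [h, h, hsymm.eq]

lemma pd_sub {f g : (Fin 3 → ℝ) → ℝ} (hf : ContDiff ℝ (⊤ : ℕ∞) f) (hg : ContDiff ℝ (⊤ : ℕ∞) g)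
    (k : Fin 3) (x : Fin 3 → ℝ) :
    pd k (fun y => f y - g y) x = pd k f x - pd k g x := by
  unfold pd
  rw [fderiv_fun_sub (hf.differentiable (by simp)).differentiableAt
    (hg.differentiable (by simp)).differentiableAt]
  simp

lemma pd_cvForm (ε : Fin 3 → Fin 3 → (Fin 3 → ℝ) → ℝ)
    (hsm : ∀ i j, ContDiff ℝ (⊤ : ℕ∞) (ε i j)) (x₁ : Fin 3 → ℝ) (i k l : Fin 3) (x : Fin 3 → ℝ) :
    pd k (cvForm ε x₁ i l) x
      = pd i (ε k l) x
        + ∑ j, (x₁ j - x j) * (pd k (pd j (ε i l)) x - pd k (pd i (ε j l)) x) := by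
  set g : Fin 3 → (Fin 3 → ℝ) → ℝ := fun j y => pd j (ε i l) y - pd i (ε j l) y with hgdef
  have hg : ∀ j, ContDiff ℝ (⊤ : ℕ∞) (g j) :=
    fun j => (contDiff_pd (hsm i l) j).sub (contDiff_pd (hsm j l) i)
  have hcoord : ∀ j : Fin 3, HasFDerivAt (fun y : Fin 3 → ℝ => x₁ j - y j)
      ((0 : (Fin 3 → ℝ) →L[ℝ] ℝ) - ContinuousLinearMap.proj j) x :=
    fun j => (hasFDerivAt_const (x₁ j) x).sub
      ((ContinuousLinearMap.proj (R := ℝ) (φ := fun _ : Fin 3 => ℝ) j).hasFDerivAt)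
  have hterm : ∀ j ∈ Finset.univ, HasFDerivAt (fun y => (x₁ j - y j) * (g j y))
      ((x₁ j - x j) • fderiv ℝ (g j) x
        + (g j x) • ((0 : (Fin 3 → ℝ) →L[ℝ] ℝ) - ContinuousLinearMap.proj j)) x :=
    fun j _ => (hcoord j).mul ((hg j).differentiable (by simp) x).hasFDerivAt
  have htot : HasFDerivAt (cvForm ε x₁ i l)
      (fderiv ℝ (ε i l) x + ∑ j, ((x₁ j - x j) • fderiv ℝ (g j) x
        + (g j x) • ((0 : (Fin 3 → ℝ) →L[ℝ] ℝ) - ContinuousLinearMap.proj j))) x :=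
    (((hsm i l).differentiable (by simp) x).hasFDerivAt).add (HasFDerivAt.sum hterm)
  have hpd : pd k (cvForm ε x₁ i l) x
      = (fderiv ℝ (ε i l) x + ∑ j, ((x₁ j - x j) • fderiv ℝ (g j) x
        + (g j x) • ((0 : (Fin 3 → ℝ) →L[ℝ] ℝ) - ContinuousLinearMap.proj j))) (Pi.single k 1) := by
    unfold pd
    rw [htot.fderiv]
  rw [hpd]
  have hgk : ∀ j, fderiv ℝ (g j) x (Pi.single k 1)
      = pd k (pd j (ε i l)) x - pd k (pd i (ε j l)) x := by
    intro j
    have := pd_sub (contDiff_pd (hsm i l) j) (contDiff_pd (hsm j l) i) k x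
    simpa [pd, hgdef] using this
  simp only [ContinuousLinearMap.add_apply, ContinuousLinearMap.sum_apply,
    ContinuousLinearMap.smul_apply, ContinuousLinearMap.sub_apply,
    ContinuousLinearMap.zero_apply, ContinuousLinearMap.proj_apply, smul_eq_mul,
    hgk]
  rw [Finset.sum_add_distrib]
  have hsingle : ∑ j, g j x * (0 - (Pi.single k 1 : Fin 3 → ℝ) j) = -(g k x) := by
    rw [Finset.sum_eq_single k]
    · simp
    · intro b _ hb
      simp [Pi.single_apply, hb]
    · simp
  rw [hsingle]
  have : pd k (ε i l) x - g k x = pd i (ε k l) x := by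
    simp only [hgdef]; ring
  show pd k (ε i l) x + (_ + -(g k x)) = _
  have h2 : fderiv ℝ (ε i l) x (Pi.single k 1) = pd k (ε i l) x := rfl
  rw [h2] at *
  linarith [this]

lemma key (ε : Fin 3 → Fin 3 → (Fin 3 → ℝ) → ℝ)
    (hsm : ∀ i j, ContDiff ℝ (⊤ : ℕ∞) (ε i j)) (hsym : ∀ i j, ε i j = ε j i)
    (x₁ : Fin 3 → ℝ) (i k l : Fin 3) (x : Fin 3 → ℝ) :
    pd k (cvForm ε x₁ i l) x - pd l (cvForm ε x₁ i k) x
      = ∑ j, (x₁ j - x j) * SV ε i l j k x := by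
  rw [pd_cvForm ε hsm x₁ i k l x, pd_cvForm ε hsm x₁ i l k x]
  have hterm : ∀ j : Fin 3,
      (x₁ j - x j) * SV ε i l j k x
        = (x₁ j - x j) * (pd k (pd j (ε i l)) x - pd k (pd i (ε j l)) x)
          - (x₁ j - x j) * (pd l (pd j (ε i k)) x - pd l (pd i (ε j k)) x) := by
    intro j
    simp only [SV]
    rw [hsym l j, pd_comm (hsm j k) i l x, pd_comm (hsm i k) j l x]
    ring
  rw [hsym l k]
  rw [Finset.sum_congr rfl (fun j _ => hterm j), Finset.sum_sub_distrib]
  ring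

/-- The Cesàro–Volterra one-forms `α^i` are closed for every base point `x₁`
if and only if the Saint-Venant tensor of `ε` vanishes identically. -/
theorem cesaro_volterra_closed_iff_saint_venant
    (ε : Fin 3 → Fin 3 → (Fin 3 → ℝ) → ℝ)
    (hsm : ∀ i j, ContDiff ℝ (⊤ : ℕ∞) (ε i j))
    (hsym : ∀ i j, ε i j = ε j i) :
    (∀ (x₁ : Fin 3 → ℝ) (i k l : Fin 3) (x : Fin 3 → ℝ),
        pd k (cvForm ε x₁ i l) x - pd l (cvForm ε x₁ i k) x = 0) ↔
    (∀ (i j k l : Fin 3) (x : Fin 3 → ℝ), SV ε i j k l x = 0) := by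
  constructor
  · intro h i j k l x
    set x₁ : Fin 3 → ℝ := x + Pi.single k 1 with hx₁
    have hk := key ε hsm hsym x₁ i l j x
    rw [h x₁ i l j x] at hk
    have : ∑ m, (x₁ m - x m) * SV ε i j m l x = SV ε i j k l x := by
      rw [Finset.sum_eq_single k]
      · simp [hx₁]
      · intro b _ hb
        simp [hx₁, Pi.single_apply, hb]
      · simp
    rw [this] at hk
    exact hk.symm
  · intro h x₁ i k l x
    rw [key ε hsm hsym x₁ i k l x]
    simp [h]
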